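/- arXiv:math/0409381 — 6 statements merged into one kernel-verified Lean document; each statement's English description precedes it below -/
import Mathlib

section
/- Suppose translates of two bricks A (with dimensions a_1,...,a_d) and B (with dimensions b_1,...,b_d) tile the unit cube Q = (-1/2,1/2)^d, i.e. ∑_{λ∈Λ_a} χ_A(x-λ) + ∑_{λ∈Λ_b} χ_B(x-λ) = χ_Q(x) for a.e. x, where Λ_a, Λ_b are finite subsets of R^d. Then for every pair of distinct indices i ≠ j in {1,...,d}, at least one of 1/a_i and 1/b_j is an integer. -/
/-!
Test the tiling identity against `f(x) = cos (2π x_i / a_i) · cos (2π x_j / b_j)`. Each translate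
of `A` contains a full period of the first factor in the `x_i` direction and each translate of `B`
a full period of the second factor in the `x_j` direction, so by Fubini `f` integrates to zero over
every tile. Over the cube, the integral is `(a_i / π) sin (π / a_i) · (b_j / π) sin (π / b_j)`,
which vanishes only if `1 / a_i` or `1 / b_j` is an integer.
-/

open MeasureTheory Real Set

variable {ι : Type*}

def brick (s : ι → ℝ) : Set (EuclideanSpace ℝ ι) :=
  {x | ∀ k, x k ∈ Ioo (-(s k) / 2) (s k / 2)}

lemma sub_mem_brick_iff (s : ι → ℝ) (l x : EuclideanSpace ℝ ι) :
    x - l ∈ brick s ↔ ∀ k, x k ∈ Ioo (l k - s k / 2) (l k + s k / 2) := by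
  refine forall_congr' fun k => ?_
  simp only [PiLp.sub_apply, mem_Ioo]
  constructor <;> rintro ⟨h₁, h₂⟩ <;> constructor <;> linarith

lemma indicator_brick_sub_mul_prod [Fintype ι] (s : ι → ℝ) (l : EuclideanSpace ℝ ι)
    (c : ι → ℝ → ℝ) (x : EuclideanSpace ℝ ι) :
    (brick s).indicator (fun _ => (1 : ℝ)) (x - l) * ∏ k, c k (x k) =
      ∏ k, (Ioo (l k - s k / 2) (l k + s k / 2)).indicator (c k) (x k) := by
  by_cases hx : x - l ∈ brick s
  · rw [indicator_of_mem hx, one_mul]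
    exact Finset.prod_congr rfl fun k _ =>
      (indicator_of_mem ((sub_mem_brick_iff s l x).mp hx k) _).symm
  · obtain ⟨k, hk⟩ := not_forall.mp (mt (sub_mem_brick_iff s l x).mpr hx)
    rw [indicator_of_notMem hx, zero_mul]
    exact (Finset.prod_eq_zero (Finset.mem_univ k) (indicator_of_notMem hk _)).symm

lemma integrable_indicator_brick_sub_mul_prod [Fintype ι] (s : ι → ℝ) (l : EuclideanSpace ℝ ι)
    {c : ι → ℝ → ℝ} (hc : ∀ k, Continuous (c k)) :
    Integrable fun x : EuclideanSpace ℝ ι =>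
      (brick s).indicator (fun _ => (1 : ℝ)) (x - l) * ∏ k, c k (x k) := by
  simp_rw [indicator_brick_sub_mul_prod s l c]
  refine ((EuclideanSpace.volume_preserving_symm_measurableEquiv_toLp ι).symm.integrable_comp_emb
    (MeasurableEquiv.measurableEmbedding _)).mp ?_
  refine Integrable.fintype_prod fun k => ?_
  exact (integrable_indicator_iff measurableSet_Ioo).mpr
    ((hc k).integrableOn_Icc.mono_set Ioo_subset_Icc_self)

lemma integral_indicator_brick_sub_mul_prod [Fintype ι] (s : ι → ℝ) (l : EuclideanSpace ℝ ι)
    (c : ι → ℝ → ℝ) :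
    ∫ x : EuclideanSpace ℝ ι, (brick s).indicator (fun _ => (1 : ℝ)) (x - l) * ∏ k, c k (x k) =
      ∏ k, ∫ t in Ioo (l k - s k / 2) (l k + s k / 2), c k t := by
  simp_rw [indicator_brick_sub_mul_prod s l c]
  rw [← (EuclideanSpace.volume_preserving_symm_measurableEquiv_toLp ι).symm.integral_comp']
  exact (integral_fintype_prod_volume_eq_prod fun k =>
    (Ioo (l k - s k / 2) (l k + s k / 2)).indicator (c k)).trans
      (Finset.prod_congr rfl fun k _ => integral_indicator measurableSet_Ioo)

lemma prod_integral_cube_eq_sum_of_tiling [Fintype ι] {a b : ι → ℝ}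
    {Λa Λb : Finset (EuclideanSpace ℝ ι)} {c : ι → ℝ → ℝ} (hc : ∀ k, Continuous (c k))
    (htile : ∀ᵐ x : EuclideanSpace ℝ ι,
      (∑ l ∈ Λa, (brick a).indicator (fun _ => (1 : ℝ)) (x - l)) +
      (∑ l ∈ Λb, (brick b).indicator (fun _ => (1 : ℝ)) (x - l)) =
      (brick fun _ => 1).indicator (fun _ => (1 : ℝ)) x) :
    ∏ k, ∫ t in Ioo (-(1 / 2)) (1 / 2), c k t =
      (∑ l ∈ Λa, ∏ k, ∫ t in Ioo (l k - a k / 2) (l k + a k / 2), c k t) +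
      ∑ l ∈ Λb, ∏ k, ∫ t in Ioo (l k - b k / 2) (l k + b k / 2), c k t := by
  have hQ := integral_indicator_brick_sub_mul_prod (fun _ => 1) 0 c
  simp only [sub_zero, PiLp.zero_apply, zero_sub, zero_add] at hQ
  have hintA l (_ : l ∈ Λa) := integrable_indicator_brick_sub_mul_prod a l hc
  have hintB l (_ : l ∈ Λb) := integrable_indicator_brick_sub_mul_prod b l hc
  simp_rw [← hQ, ← integral_indicator_brick_sub_mul_prod]
  rw [← integral_finsetSum _ hintA, ← integral_finsetSum _ hintB,
    ← integral_add (integrable_finsetSum _ hintA) (integrable_finsetSum _ hintB)]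
  refine integral_congr_ae (htile.mono fun x hx => ?_)
  simp only [← Finset.sum_mul, ← add_mul, hx]

lemma integral_Ioo_cos_mul {ω : ℝ} (hω : ω ≠ 0) {u v : ℝ} (huv : u ≤ v) :
    ∫ t in Ioo u v, cos (ω * t) = (sin (ω * v) - sin (ω * u)) / ω := by
  rw [← integral_Ioc_eq_integral_Ioo, ← intervalIntegral.integral_of_le huv,
    intervalIntegral.integral_comp_mul_left (fun t => cos t) hω, integral_cos, smul_eq_mul,
    inv_mul_eq_div]

lemma integral_cos_over_period_eq_zero {p : ℝ} (hp : 0 < p) (c : ℝ) :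
    ∫ t in Ioo (c - p / 2) (c + p / 2), cos (2 * π / p * t) = 0 := by
  rw [integral_Ioo_cos_mul (by positivity) (by linarith)]
  have hv : 2 * π / p * (c + p / 2) = 2 * π / p * c + π := by field_simp
  have hu : 2 * π / p * (c - p / 2) = 2 * π / p * c - π := by field_simp
  rw [hv, hu, sin_add_pi, sin_sub_pi, sub_self, zero_div]

lemma integral_cos_over_unit_ne_zero {p : ℝ} (hp : ∀ n : ℤ, p⁻¹ ≠ n) :
    ∫ t in Ioo (-(1 / 2)) (1 / 2), cos (2 * π / p * t) ≠ 0 := by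
  have hp₀ : p ≠ 0 := by rintro rfl; exact hp 0 (by simp)
  have hsin : sin (π / p) ≠ 0 := by
    rw [Ne, sin_eq_zero_iff]
    rintro ⟨n, hn⟩
    exact hp n (mul_left_cancel₀ pi_ne_zero (by rw [← div_eq_mul_inv, ← hn, mul_comm]))
  rw [integral_Ioo_cos_mul (by positivity) (by norm_num)]
  have hv : 2 * π / p * (1 / 2) = π / p := by ring
  have hu : 2 * π / p * (-(1 / 2)) = -(π / p) := by ring
  rw [hv, hu, sin_neg, sub_neg_eq_add, ← two_mul]
  exact div_ne_zero (mul_ne_zero two_ne_zero hsin) (by positivity)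

theorem tiling_two_bricks_key_observation_general (d : ℕ)
    (a b : Fin d → ℝ) (ha : ∀ j, 0 < a j) (hb : ∀ j, 0 < b j)
    (A B Q : Set (EuclideanSpace ℝ (Fin d)))
    (hA : A = {x : EuclideanSpace ℝ (Fin d) | ∀ j, x j ∈ Set.Ioo (-(a j) / 2) (a j / 2)})
    (hB : B = {x : EuclideanSpace ℝ (Fin d) | ∀ j, x j ∈ Set.Ioo (-(b j) / 2) (b j / 2)})
    (hQ : Q = {x : EuclideanSpace ℝ (Fin d) | ∀ j, x j ∈ Set.Ioo (-(1 : ℝ) / 2) (1 / 2)})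
    (Λa Λb : Finset (EuclideanSpace ℝ (Fin d)))
    (htile : ∀ᵐ x : EuclideanSpace ℝ (Fin d),
      (∑ l ∈ Λa, A.indicator (fun _ => (1 : ℝ)) (x - l)) +
      (∑ l ∈ Λb, B.indicator (fun _ => (1 : ℝ)) (x - l)) =
      Q.indicator (fun _ => (1 : ℝ)) x) :
    ∀ i j : Fin d, i ≠ j →
      (∃ n : ℤ, (a i)⁻¹ = n) ∨ (∃ n : ℤ, (b j)⁻¹ = n) := by
  intro i j hij
  by_contra! ⟨hai, hbj⟩
  subst hA hB hQ
  let c : Fin d → ℝ → ℝ := fun k t =>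
    if k = i then cos (2 * π / a i * t) else if k = j then cos (2 * π / b j * t) else 1
  have hc : ∀ k, Continuous (c k) := fun k => by dsimp only [c]; split_ifs <;> fun_prop
  have hbrickA : ∀ l : EuclideanSpace ℝ (Fin d),
      ∏ k, ∫ t in Ioo (l k - a k / 2) (l k + a k / 2), c k t = 0 := fun l =>
    Finset.prod_eq_zero (Finset.mem_univ i)
      (by simpa [c] using integral_cos_over_period_eq_zero (ha i) (l i))
  have hbrickB : ∀ l : EuclideanSpace ℝ (Fin d),
      ∏ k, ∫ t in Ioo (l k - b k / 2) (l k + b k / 2), c k t = 0 := fun l =>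
    Finset.prod_eq_zero (Finset.mem_univ j)
      (by simpa [c, hij.symm] using integral_cos_over_period_eq_zero (hb j) (l j))
  have hcube : ∏ k, ∫ t in Ioo (-(1 / 2)) (1 / 2), c k t ≠ 0 := by
    refine Finset.prod_ne_zero_iff.mpr fun k _ => ?_
    by_cases hki : k = i
    · simpa [c, hki] using integral_cos_over_unit_ne_zero hai
    by_cases hkj : k = j
    · simpa [c, hkj, hij.symm] using integral_cos_over_unit_ne_zero hbj
    simp [c, hki, hkj]
  have key := prod_integral_cube_eq_sum_of_tiling hc htile
  simp only [hbrickA, hbrickB, Finset.sum_const_zero, add_zero] at key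
  exact hcube key

/-- If translates of two bricks `A` and `B` tile the unit cube `Q = (-1/2,1/2)^d`,
then for every pair of distinct indices `i ≠ j`, at least one of `1 / a i` and `1 / b j`
is an integer. -/
theorem tiling_two_bricks_key_observation (d : ℕ) (hd : 2 ≤ d)
    (a b : Fin d → ℝ) (ha : ∀ j, 0 < a j) (hb : ∀ j, 0 < b j)
    (A B Q : Set (EuclideanSpace ℝ (Fin d)))
    (hA : A = {x : EuclideanSpace ℝ (Fin d) | ∀ j, x j ∈ Set.Ioo (-(a j) / 2) (a j / 2)})
    (hB : B = {x : EuclideanSpace ℝ (Fin d) | ∀ j, x j ∈ Set.Ioo (-(b j) / 2) (b j / 2)})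
    (hQ : Q = {x : EuclideanSpace ℝ (Fin d) | ∀ j, x j ∈ Set.Ioo (-(1 : ℝ) / 2) (1 / 2)})
    (Λa Λb : Finset (EuclideanSpace ℝ (Fin d)))
    (htile : ∀ᵐ x : EuclideanSpace ℝ (Fin d),
      (∑ l ∈ Λa, A.indicator (fun _ => (1 : ℝ)) (x - l)) +
      (∑ l ∈ Λb, B.indicator (fun _ => (1 : ℝ)) (x - l)) =
      Q.indicator (fun _ => (1 : ℝ)) x) :
    ∀ i j : Fin d, i ≠ j →
      (∃ n : ℤ, (a i)⁻¹ = n) ∨ (∃ n : ℤ, (b j)⁻¹ = n) :=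
  tiling_two_bricks_key_observation_general d a b ha hb A B Q hA hB hQ Λa Λb htile
end

section
/- Suppose a trigonometric sum identity φ_a(ξ)·F_A(ξ) + φ_b(ξ)·F_B(ξ) = F_Q(ξ) holds for all ξ ∈ R^d, where F_A, F_B, F_Q are the Fourier transforms of the indicator functions of boxes A, B, Q respectively, and φ_a, φ_b are finite exponential sums. If 1/a_i ∉ Z and 1/b_j ∉ Z for some i ≠ j, then the left-hand side vanishes at some point where F_Q does not vanish, a contradiction; hence for every i ≠ j at least one of 1/a_i, 1/b_j is an integer. -/
open Real MeasureTheory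
open scoped RealInnerProductSpace

/-!
The Fourier transform of the indicator of a box `∏ (-Lₖ/2, Lₖ/2)` factors as
`∏ sin(π ξₖ Lₖ)/(π ξₖ)`, which vanishes exactly when some `ξₖ Lₖ` is a nonzero integer.
If neither `1/aᵢ` nor `1/bⱼ` is an integer, take `ξ` with `ξᵢ = 1/aᵢ`, `ξⱼ = 1/bⱼ` and all
other coordinates `0`: then `F_A(ξ) = F_B(ξ) = 0`, while no `ξₖ` is a nonzero integer,
so `F_Q(ξ) ≠ 0`.
-/

theorem fourier_euclideanSpace_prod {ι : Type*} [Fintype ι] (f : ι → ℝ → ℂ)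
    (ξ : EuclideanSpace ℝ ι) :
    FourierTransform.fourier (fun x : EuclideanSpace ℝ ι => ∏ k, f k (x k)) ξ =
      ∏ k, FourierTransform.fourier (f k) (ξ k) := by
  rw [Real.fourier_eq']
  simp_rw [Real.fourier_real_eq_integral_exp_smul, smul_eq_mul]
  rw [← (PiLp.volume_preserving_toLp ι).integral_comp
    (MeasurableEquiv.toLp 2 (ι → ℝ)).measurableEmbedding, ← integral_fintype_prod_volume_eq_prod]
  congr 1 with y
  simp only [PiLp.inner_apply, RCLike.inner_apply, conj_trivial, Finset.mul_sum, Complex.ofReal_sum,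
    Finset.sum_mul, Complex.exp_sum, Finset.prod_mul_distrib]
  congr 2 with k
  push_cast; ring_nf

theorem indicator_setOf_forall_mem_eq_prod {ι : Type*} [Fintype ι] (s : ι → Set ℝ)
    (x : EuclideanSpace ℝ ι) :
    {y : EuclideanSpace ℝ ι | ∀ k, y k ∈ s k}.indicator (fun _ => (1 : ℂ)) x =
      ∏ k, (s k).indicator (fun _ => (1 : ℂ)) (x k) := by
  classical
  simp [Set.indicator_apply, Finset.prod_ite_zero]

theorem fourier_indicator_setOf_forall_mem {ι : Type*} [Fintype ι] (s : ι → Set ℝ)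
    (ξ : EuclideanSpace ℝ ι) :
    FourierTransform.fourier
        ({x : EuclideanSpace ℝ ι | ∀ k, x k ∈ s k}.indicator fun _ => (1 : ℂ)) ξ =
      ∏ k, FourierTransform.fourier ((s k).indicator fun _ => (1 : ℂ)) (ξ k) := by
  simp_rw [funext (indicator_setOf_forall_mem_eq_prod _), fourier_euclideanSpace_prod]

theorem fourier_indicator_Ioo_zero {L : ℝ} (hL : 0 ≤ L) :
    FourierTransform.fourier ((Set.Ioo (-L / 2) (L / 2)).indicator fun _ => (1 : ℂ)) 0 = L := by
  rw [Real.fourier_real_eq_integral_exp_smul]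
  simp [integral_indicator measurableSet_Ioo, show L / 2 - -L / 2 = L by ring, hL]

theorem fourier_indicator_Ioo_of_ne_zero {L t : ℝ} (hL : 0 ≤ L) (ht : t ≠ 0) :
    FourierTransform.fourier ((Set.Ioo (-L / 2) (L / 2)).indicator fun _ => (1 : ℂ)) t =
      (Real.sin (π * t * L) / (π * t) : ℝ) := by
  have hc : -2 * π * t * Complex.I ≠ 0 := by simp [Real.pi_ne_zero, ht]
  have hπt : (π * t : ℂ) ≠ 0 := by exact_mod_cast mul_ne_zero Real.pi_ne_zero ht
  have h_integrand : ∀ v : ℝ, Complex.exp (↑(-2 * π * v * t) * Complex.I) •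
      (Set.Ioo (-L / 2) (L / 2)).indicator (fun _ => (1 : ℂ)) v =
      (Set.Ioo (-L / 2) (L / 2)).indicator
        (fun v : ℝ => Complex.exp (-2 * π * t * Complex.I * v)) v := by
    intro v
    by_cases hv : v ∈ Set.Ioo (-L / 2) (L / 2) <;> simp [hv, mul_right_comm _ (v : ℂ)]
  simp_rw [Real.fourier_real_eq_integral_exp_smul, h_integrand]
  rw [integral_indicator measurableSet_Ioo, ← integral_Ioc_eq_integral_Ioo,
    ← intervalIntegral.integral_of_le (by linarith), integral_exp_mul_complex hc]
  push_cast
  rw [Complex.sin]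
  field_simp
  ring_nf
  rw [Complex.I_sq]
  ring_nf

theorem fourier_indicator_Ioo_eq_zero_iff {L t : ℝ} (hL : 0 < L) :
    FourierTransform.fourier ((Set.Ioo (-L / 2) (L / 2)).indicator fun _ => (1 : ℂ)) t = 0 ↔
      ∃ n : ℤ, n ≠ 0 ∧ t * L = n := by
  rcases eq_or_ne t 0 with rfl | ht
  · simp [fourier_indicator_Ioo_zero hL.le, hL.ne', eq_comm]
  rw [fourier_indicator_Ioo_of_ne_zero hL.le ht, Complex.ofReal_eq_zero,
    div_eq_zero_iff, or_iff_left (mul_ne_zero Real.pi_ne_zero ht), Real.sin_eq_zero_iff]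
  constructor
  · rintro ⟨n, hn⟩
    have htL : t * L = n := by
      apply mul_left_cancel₀ Real.pi_ne_zero
      linarith
    refine ⟨n, ?_, htL⟩
    rintro rfl
    simp [ht, hL.ne'] at htL
  · rintro ⟨n, -, hn⟩
    exact ⟨n, by rw [mul_assoc, hn]; ring⟩

theorem fourier_indicator_Ioo_inv {L : ℝ} (hL : 0 < L) :
    FourierTransform.fourier ((Set.Ioo (-L / 2) (L / 2)).indicator fun _ => (1 : ℂ)) L⁻¹ = 0 :=
  (fourier_indicator_Ioo_eq_zero_iff hL).2 ⟨1, one_ne_zero, by simp [hL.ne']⟩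

theorem fourier_identity_forces_integrality_general (d : ℕ)
    (a b : Fin d → ℝ) (ha : ∀ j, 0 < a j) (hb : ∀ j, 0 < b j)
    (A B Q : Set (EuclideanSpace ℝ (Fin d)))
    (hA : A = {x : EuclideanSpace ℝ (Fin d) | ∀ j, x j ∈ Set.Ioo (-(a j) / 2) (a j / 2)})
    (hB : B = {x : EuclideanSpace ℝ (Fin d) | ∀ j, x j ∈ Set.Ioo (-(b j) / 2) (b j / 2)})
    (hQ : Q = {x : EuclideanSpace ℝ (Fin d) | ∀ j, x j ∈ Set.Ioo (-(1 : ℝ) / 2) (1 / 2)})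
    (Λa Λb : Finset (EuclideanSpace ℝ (Fin d)))
    (hid : ∀ ξ : EuclideanSpace ℝ (Fin d),
      (∑ l ∈ Λa, Complex.exp (2 * π * Complex.I * (⟪l, ξ⟫ : ℝ))) *
        FourierTransform.fourier (A.indicator (fun _ => (1 : ℂ))) ξ +
      (∑ l ∈ Λb, Complex.exp (2 * π * Complex.I * (⟪l, ξ⟫ : ℝ))) *
        FourierTransform.fourier (B.indicator (fun _ => (1 : ℂ))) ξ =
      FourierTransform.fourier (Q.indicator (fun _ => (1 : ℂ))) ξ) :
    ∀ i j : Fin d, i ≠ j →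
      (∃ n : ℤ, (a i)⁻¹ = n) ∨ (∃ n : ℤ, (b j)⁻¹ = n) := by
  intro i j hij
  by_contra! h
  obtain ⟨hna, hnb⟩ := h
  let ξ : EuclideanSpace ℝ (Fin d) :=
    WithLp.toLp 2 fun k => if k = i then (a i)⁻¹ else if k = j then (b j)⁻¹ else 0
  have hFA : FourierTransform.fourier (A.indicator fun _ => (1 : ℂ)) ξ = 0 := by
    rw [hA, fourier_indicator_setOf_forall_mem fun k => Set.Ioo (-a k / 2) (a k / 2)]
    exact Finset.prod_eq_zero (Finset.mem_univ i)
      (by simpa [ξ] using fourier_indicator_Ioo_inv (ha i))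
  have hFB : FourierTransform.fourier (B.indicator fun _ => (1 : ℂ)) ξ = 0 := by
    rw [hB, fourier_indicator_setOf_forall_mem fun k => Set.Ioo (-b k / 2) (b k / 2)]
    exact Finset.prod_eq_zero (Finset.mem_univ j)
      (by simpa [ξ, hij.symm] using fourier_indicator_Ioo_inv (hb j))
  have hFQ : FourierTransform.fourier (Q.indicator fun _ => (1 : ℂ)) ξ ≠ 0 := by
    rw [hQ, fourier_indicator_setOf_forall_mem fun _ => Set.Ioo (-1 / 2) (1 / 2)]
    refine Finset.prod_ne_zero_iff.2 fun k _ => ?_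
    rw [Ne, fourier_indicator_Ioo_eq_zero_iff one_pos]
    rintro ⟨n, hn0, hn⟩
    rw [mul_one] at hn
    by_cases hki : k = i
    · subst hki; exact hna n (by simpa [ξ] using hn)
    by_cases hkj : k = j
    · subst hkj; exact hnb n (by simpa [ξ, hki] using hn)
    · exact hn0 (by simpa [ξ, hki, hkj, eq_comm] using hn)
  exact hFQ (by simpa [hFA, hFB, eq_comm] using hid ξ)

/-- If the Fourier-side identity `φ_a · F_A + φ_b · F_B = F_Q` holds everywhere, where
`F_A, F_B, F_Q` are the Fourier transforms of the indicators of the boxes `A`, `B`, `Q`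
and `φ_a, φ_b` are finite exponential sums, then for every `i ≠ j` at least one of
`1 / a i`, `1 / b j` is an integer. -/
theorem fourier_identity_forces_integrality (d : ℕ) (hd : 2 ≤ d)
    (a b : Fin d → ℝ) (ha : ∀ j, 0 < a j) (hb : ∀ j, 0 < b j)
    (A B Q : Set (EuclideanSpace ℝ (Fin d)))
    (hA : A = {x : EuclideanSpace ℝ (Fin d) | ∀ j, x j ∈ Set.Ioo (-(a j) / 2) (a j / 2)})
    (hB : B = {x : EuclideanSpace ℝ (Fin d) | ∀ j, x j ∈ Set.Ioo (-(b j) / 2) (b j / 2)})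
    (hQ : Q = {x : EuclideanSpace ℝ (Fin d) | ∀ j, x j ∈ Set.Ioo (-(1 : ℝ) / 2) (1 / 2)})
    (Λa Λb : Finset (EuclideanSpace ℝ (Fin d)))
    (hid : ∀ ξ : EuclideanSpace ℝ (Fin d),
      (∑ l ∈ Λa, Complex.exp (2 * π * Complex.I * (⟪l, ξ⟫ : ℝ))) *
        FourierTransform.fourier (A.indicator (fun _ => (1 : ℂ))) ξ +
      (∑ l ∈ Λb, Complex.exp (2 * π * Complex.I * (⟪l, ξ⟫ : ℝ))) *
        FourierTransform.fourier (B.indicator (fun _ => (1 : ℂ))) ξ =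
      FourierTransform.fourier (Q.indicator (fun _ => (1 : ℂ))) ξ) :
    ∀ i j : Fin d, i ≠ j →
      (∃ n : ℤ, (a i)⁻¹ = n) ∨ (∃ n : ℤ, (b j)⁻¹ = n) :=
  fourier_identity_forces_integrality_general d a b ha hb A B Q hA hB hQ Λa Λb hid
end

section
/- If translates of bricks A and B tile the unit cube Q = (-1/2,1/2)^d, then there exist nonnegative integers m, n such that m·a_1 + n·b_1 = 1. -/
/-!
Cut the tiling by a line parallel to the first axis through a point of `Q`. By translation
invariance and Fubini, the a.e. tiling identity survives on almost every such line. A translate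
of a brick meets the line either not at all or in an open interval whose length is the brick's
first side, while `Q` meets it in an interval of length `1`; integrating the identity along the
line gives `m * a₁ + n * b₁ = 1`, where `m` and `n` count the translates met.
-/

open MeasureTheory Set

theorem ae_ae_add_of_ae {G T : Type*} [MeasurableSpace G] [Add G] [MeasurableAdd₂ G]
    [MeasurableSpace T] {μ : Measure G} [SFinite μ] [μ.IsAddRightInvariant]
    {ν : Measure T} [SFinite ν] {f : T → G} (hf : Measurable f) {p : G → Prop}
    (h : ∀ᵐ x ∂μ, p x) : ∀ᵐ x ∂μ, ∀ᵐ t ∂ν, p (x + f t) := by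
  -- Swapping the two a.e. quantifiers needs a measurable set, hence the measurable null `N`.
  obtain ⟨N, hpN, hNm, hN⟩ := exists_measurable_superset_of_null h
  have hN' : ∀ᵐ x ∂μ, x ∉ N := measure_eq_zero_iff_ae_notMem.1 hN
  have hgood : ∀ᵐ x ∂μ, ∀ᵐ t ∂ν, x + f t ∉ N :=
    (Measure.ae_ae_comm (p := fun x t => x + f t ∉ N)
      (hNm.compl.preimage (measurable_fst.add (hf.comp measurable_snd)))).2 <|
      ae_of_all _ fun t => (measurePreserving_add_right μ (f t)).quasiMeasurePreserving.ae hN'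
  exact hgood.mono fun x hx => hx.mono fun t ht => not_not.1 fun hp => ht (hpN hp)

namespace EuclideanSpace

variable {ι : Type*}

def centeredBox (w : ι → ℝ) : Set (EuclideanSpace ℝ ι) :=
  {x | ∀ j, x j ∈ Ioo (-(w j) / 2) (w j / 2)}

theorem isOpen_centeredBox [Fintype ι] (w : ι → ℝ) : IsOpen (centeredBox w) := by
  simp only [centeredBox, ofPred_forall]
  exact isOpen_iInter_of_finite fun j => isOpen_Ioo.preimage (by fun_prop)

theorem zero_mem_centeredBox {w : ι → ℝ} (hw : ∀ j, 0 < w j) : 0 ∈ centeredBox w :=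
  fun j => by
  have := hw j
  constructor <;> simp <;> linarith

variable [DecidableEq ι] {w : ι → ℝ} {i : ι}

open Classical in
theorem preimage_line_centeredBox (w : ι → ℝ) (i : ι) (y : EuclideanSpace ℝ ι) :
    (fun t : ℝ => y + t • single i (1 : ℝ)) ⁻¹' centeredBox w =
      if ∀ j ≠ i, y j ∈ Ioo (-(w j) / 2) (w j / 2) then Ioo (-(w i) / 2 - y i) (w i / 2 - y i)
      else ∅ := by
  ext t
  have hcoord : ∀ j, (y + t • single i (1 : ℝ)) j = Function.update (⇑y) i (y i + t) j := by
    intro j; rcases eq_or_ne j i with rfl | h <;> simp [*]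
  simp only [centeredBox, mem_preimage, mem_ofPred_eq, hcoord]
  rw [Function.forall_update_iff (p := fun j s => s ∈ Ioo (-(w j) / 2) (w j / 2))]
  split_ifs with h
  · rw [and_iff_left h, add_mem_Ioo_iff_right]
  · exact iff_of_false (fun h' => h h'.2) (notMem_empty t)

open Classical in
theorem integral_indicator_centeredBox_line (hw : 0 ≤ w i) (y : EuclideanSpace ℝ ι) :
    ∫ t : ℝ, (centeredBox w).indicator (fun _ => (1 : ℝ)) (y + t • single i (1 : ℝ)) =
      if ∀ j ≠ i, y j ∈ Ioo (-(w j) / 2) (w j / 2) then w i else 0 := by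
  simp_rw [← indicator_comp_right (fun t => y + t • single i (1 : ℝ)), Function.comp_def,
    preimage_line_centeredBox]
  split_ifs
  · rw [integral_indicator_const _ measurableSet_Ioo, Real.volume_real_Ioo_of_le (by linarith)]
    rw [sub_sub_sub_cancel_right, smul_eq_mul, mul_one]; ring
  · simp

theorem integrable_indicator_centeredBox_line (y : EuclideanSpace ℝ ι) :
    Integrable fun t : ℝ =>
      (centeredBox w).indicator (fun _ => (1 : ℝ)) (y + t • single i (1 : ℝ)) := by
  simp_rw [← indicator_comp_right (fun t => y + t • single i (1 : ℝ)), Function.comp_def,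
    preimage_line_centeredBox]
  split_ifs
  · exact (integrableOn_const measure_Ioo_lt_top.ne).integrable_indicator measurableSet_Ioo
  · simp

theorem integrable_sum_indicator_centeredBox_line (Λ : Finset (EuclideanSpace ℝ ι))
    (x : EuclideanSpace ℝ ι) :
    Integrable fun t : ℝ => ∑ l ∈ Λ,
      (centeredBox w).indicator (fun _ => (1 : ℝ)) (x + t • single i (1 : ℝ) - l) := by
  simp_rw [add_sub_right_comm x]
  exact integrable_finsetSum _ fun l _ => integrable_indicator_centeredBox_line (x - l)

open Classical in
theorem integral_sum_indicator_centeredBox_line (hw : 0 ≤ w i)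
    (Λ : Finset (EuclideanSpace ℝ ι)) (x : EuclideanSpace ℝ ι) :
    ∫ t : ℝ, ∑ l ∈ Λ,
        (centeredBox w).indicator (fun _ => (1 : ℝ)) (x + t • single i (1 : ℝ) - l) =
      (Λ.filter fun l => ∀ j ≠ i, (x - l) j ∈ Ioo (-(w j) / 2) (w j / 2)).card * w i := by
  simp_rw [add_sub_right_comm x]
  rw [integral_finsetSum _ fun l _ => integrable_indicator_centeredBox_line (x - l)]
  simp only [integral_indicator_centeredBox_line hw]
  rw [← Finset.sum_filter, Finset.sum_const, nsmul_eq_mul]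

end EuclideanSpace

open EuclideanSpace

/-- If translates of bricks `A` and `B` tile the unit cube `Q = (-1/2,1/2)^d`, then
`1 = m * a 0 + n * b 0` for some nonnegative integers `m`, `n`. -/
theorem tiling_two_bricks_first_side (d : ℕ) (hd : 1 ≤ d)
    (a b : Fin d → ℝ) (ha : ∀ j, 0 < a j) (hb : ∀ j, 0 < b j)
    (A B Q : Set (EuclideanSpace ℝ (Fin d)))
    (hA : A = {x : EuclideanSpace ℝ (Fin d) | ∀ j, x j ∈ Set.Ioo (-(a j) / 2) (a j / 2)})
    (hB : B = {x : EuclideanSpace ℝ (Fin d) | ∀ j, x j ∈ Set.Ioo (-(b j) / 2) (b j / 2)})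
    (hQ : Q = {x : EuclideanSpace ℝ (Fin d) | ∀ j, x j ∈ Set.Ioo (-(1 : ℝ) / 2) (1 / 2)})
    (Λa Λb : Finset (EuclideanSpace ℝ (Fin d)))
    (htile : ∀ᵐ x : EuclideanSpace ℝ (Fin d),
      (∑ l ∈ Λa, A.indicator (fun _ => (1 : ℝ)) (x - l)) +
      (∑ l ∈ Λb, B.indicator (fun _ => (1 : ℝ)) (x - l)) =
      Q.indicator (fun _ => (1 : ℝ)) x) :
    ∃ m n : ℕ, (m : ℝ) * a ⟨0, hd⟩ + (n : ℝ) * b ⟨0, hd⟩ = 1 := by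
  obtain rfl : A = centeredBox a := hA
  obtain rfl : B = centeredBox b := hB
  obtain rfl : Q = centeredBox fun _ => 1 := hQ
  set i : Fin d := ⟨0, hd⟩
  have hQ_ne_zero : volume (centeredBox fun _ : Fin d => (1 : ℝ)) ≠ 0 :=
    (isOpen_centeredBox _).measure_ne_zero volume ⟨0, zero_mem_centeredBox fun _ => one_pos⟩
  obtain ⟨x, hxQ, hx⟩ := Measure.exists_mem_of_measure_ne_zero_of_ae hQ_ne_zero
    (ae_restrict_of_ae (ae_ae_add_of_ae (μ := volume) (ν := volume)
      (f := fun t : ℝ => t • single i (1 : ℝ)) (by fun_prop) htile))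
  have hline := integral_congr_ae hx
  rw [integral_add (integrable_sum_indicator_centeredBox_line _ _)
      (integrable_sum_indicator_centeredBox_line _ _),
    integral_sum_indicator_centeredBox_line (ha i).le,
    integral_sum_indicator_centeredBox_line (hb i).le,
    integral_indicator_centeredBox_line (w := fun _ => 1) zero_le_one,
    if_pos fun j _ => hxQ j] at hline
  exact ⟨_, _, hline⟩
end

section
/- (Bower–Michael) If translates of two bricks A and B tile a box Q in R^d, then Q can be split by a single hyperplane cut of the form x_j = α into two boxes Q_a and Q_b such that Q_a can be tiled by translates of A alone and Q_b by translates of B alone (one of the two boxes may be empty). -/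
open MeasureTheory

/-- `Brick d c` is the axis-aligned box `∏_j (0, c j)` in `ℝ^d`. -/
def Brick (d : ℕ) (c : Fin d → ℝ) : Set (EuclideanSpace ℝ (Fin d)) :=
  {x | ∀ j, x j ∈ Set.Ioo 0 (c j)}

/-- A set `S` can be tiled by translates of the set `C` (finitely many, possibly none). -/
def TilesBy (d : ℕ) (C S : Set (EuclideanSpace ℝ (Fin d))) : Prop :=
  ∃ Λ : Finset (EuclideanSpace ℝ (Fin d)),
    ∀ᵐ x : EuclideanSpace ℝ (Fin d),
      (∑ l ∈ Λ, C.indicator (fun _ => (1 : ℝ)) (x - l)) = S.indicator (fun _ => (1 : ℝ)) x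

/-!
Let `Q = ∏ (lo j, hi j)`. Two facts about the side lengths of `Q` give the cut.

* For `j ≠ k`, integrate the tiling identity against `y ↦ e(y j / a j) e(y k / b k)` with
  `e(t) = exp(2πit)`. Over a translate of `A` the factor in direction `j` integrates to `0`, over a
  translate of `B` the factor in direction `k` does; so the integral over `Q`, a product of
  one-dimensional integrals, vanishes too, whence `a j ∣ hi j - lo j` or `b k ∣ hi k - lo k`.
* Along a generic line in direction `j` through `Q` the tiles cut out intervals of lengths `a j`
  and `b j` covering `(lo j, hi j)`, so `hi j - lo j = m a j + n b j` with `m n : ℕ`.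

If every side of `Q` is a multiple of the side of `A`, `A` tiles `Q`. Otherwise some `j` fails,
the first fact makes every other side a multiple of both `a` and `b`, and cutting at
`lo j + m a j` splits `Q` into a box tiled by `A` and one tiled by `B`.
-/

open Set Complex Real Function

section Boxes

variable {ι : Type*}

def openBox (l u : ι → ℝ) : Set (ι → ℝ) := univ.pi fun j => Ioo (l j) (u j)

noncomputable def brickCount (c : ι → ℝ) (Λ : Finset (ι → ℝ)) (y : ι → ℝ) : ℝ :=
  ∑ l ∈ Λ, (openBox l (l + c)).indicator 1 y

def IsSideMultiple (c l u : ι → ℝ) (j : ι) : Prop := ∃ m : ℕ, u j - l j = m * c j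

lemma measurableSet_openBox [Countable ι] (l u : ι → ℝ) : MeasurableSet (openBox l u) :=
  MeasurableSet.univ_pi fun _ => measurableSet_Ioo

lemma indicator_openBox_apply [Fintype ι] (l u y : ι → ℝ) :
    (openBox l u).indicator (1 : (ι → ℝ) → ℝ) y = ∏ j, (Ioo (l j) (u j)).indicator 1 (y j) := by
  simpa [openBox] using indicator_pi_one_apply (M₀ := ℝ) Finset.univ (fun j => Ioo (l j) (u j)) y

lemma openBox_eq_empty {l u : ι → ℝ} {j : ι} (h : u j ≤ l j) : openBox l u = ∅ :=
  univ_pi_eq_empty (Ioo_eq_empty h.not_gt)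

variable [DecidableEq ι]

lemma sep_lt_openBox {l u : ι → ℝ} {j : ι} {α : ℝ} (h : α ≤ u j) :
    {y ∈ openBox l u | y j < α} = openBox l (update u j α) := by
  ext y
  simp only [openBox, mem_ofPred_eq, mem_univ_pi, mem_Ioo]
  rw [forall_update_iff u fun k v => l k < y k ∧ y k < v]
  constructor
  · rintro ⟨hy, hyα⟩
    exact ⟨⟨(hy j).1, hyα⟩, fun k _ => hy k⟩
  · rintro ⟨hyj, hy⟩
    refine ⟨fun k => ?_, hyj.2⟩
    rcases eq_or_ne k j with rfl | hk
    exacts [⟨hyj.1, hyj.2.trans_le h⟩, hy k hk]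

lemma sep_gt_openBox {l u : ι → ℝ} {j : ι} {α : ℝ} (h : l j ≤ α) :
    {y ∈ openBox l u | α < y j} = openBox (update l j α) u := by
  ext y
  simp only [openBox, mem_ofPred_eq, mem_univ_pi, mem_Ioo]
  rw [forall_update_iff l fun k v => v < y k ∧ y k < u k]
  constructor
  · rintro ⟨hy, hyα⟩
    exact ⟨⟨hyα, (hy j).2⟩, fun k _ => hy k⟩
  · rintro ⟨hyj, hy⟩
    refine ⟨fun k => ?_, hyj.1⟩
    rcases eq_or_ne k j with rfl | hk
    exacts [⟨h.trans_lt hyj.1, hyj.2⟩, hy k hk]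

theorem exists_cut_of_isSideMultiple [Nonempty ι] {a b lo hi : ι → ℝ}
    (ha : ∀ j, 0 ≤ a j) (hb : ∀ j, 0 ≤ b j) (hlo : ∀ j, lo j ≤ hi j)
    (hab : ∀ j k, j ≠ k → IsSideMultiple a lo hi j ∨ IsSideMultiple b lo hi k)
    (hsum : ∀ j, ∃ m n : ℕ, hi j - lo j = m * a j + n * b j) :
    ∃ j α, lo j ≤ α ∧ α ≤ hi j ∧
      (α = lo j ∨ ∀ k, IsSideMultiple a lo (update hi j α) k) ∧
      (α = hi j ∨ ∀ k, IsSideMultiple b (update lo j α) hi k) := by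
  by_cases hA : ∀ k, IsSideMultiple a lo hi k
  · obtain ⟨j⟩ := ‹Nonempty ι›
    exact ⟨j, hi j, hlo j, le_rfl, .inr (by simpa using hA), .inl rfl⟩
  push Not at hA
  obtain ⟨j, hj⟩ := hA
  have hB : ∀ k ≠ j, IsSideMultiple b lo hi k := fun k hk => (hab j k hk.symm).resolve_left hj
  by_cases hbj : IsSideMultiple b lo hi j
  · have hB' : ∀ k, IsSideMultiple b lo hi k := fun k => (eq_or_ne k j).elim (· ▸ hbj) (hB k)
    exact ⟨j, lo j, le_rfl, hlo j, .inl rfl, .inr (by simpa using hB')⟩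
  have hA : ∀ k ≠ j, IsSideMultiple a lo hi k := fun k hk => (hab k j hk).resolve_right hbj
  obtain ⟨m, n, hmn⟩ := hsum j
  have hm : 0 ≤ (m : ℝ) * a j := mul_nonneg m.cast_nonneg (ha j)
  have hn : 0 ≤ (n : ℝ) * b j := mul_nonneg n.cast_nonneg (hb j)
  refine ⟨j, lo j + m * a j, by linarith, by linarith, .inr fun k => ?_, .inr fun k => ?_⟩
  · rcases eq_or_ne k j with rfl | hk
    · exact ⟨m, by simp⟩
    · simpa [IsSideMultiple, hk] using hA k hk
  · rcases eq_or_ne k j with rfl | hk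
    · exact ⟨n, by simp; linarith⟩
    · simpa [IsSideMultiple, hk] using hB k hk

end Boxes

lemma indicator_Ioo_add_indicator_Ioo {a b c t : ℝ} (hab : a ≤ b) (hbc : b ≤ c) (ht : t ≠ b) :
    (Ioo a b).indicator (1 : ℝ → ℝ) t + (Ioo b c).indicator 1 t = (Ioo a c).indicator 1 t := by
  rcases ht.lt_or_gt with ht | ht
  · by_cases hat : a < t <;> simp [hat, ht, ht.trans_le hbc, ht.not_gt]
  · simp [indicator_apply, hab.trans_lt ht, ht, ht.not_gt]

lemma sum_indicator_Ioo_grid_ae {c : ℝ} (hc : 0 ≤ c) (l : ℝ) (m : ℕ) :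
    (fun t => ∑ i ∈ Finset.range m, (Ioo (l + i * c) (l + i * c + c)).indicator (1 : ℝ → ℝ) t)
      =ᵐ[volume] (Ioo l (l + m * c)).indicator 1 := by
  induction m with
  | zero => simp
  | succ m ih =>
    filter_upwards [ih, Measure.ae_ne volume (l + m * c)] with t ht hne
    rw [Finset.sum_range_succ, ht, indicator_Ioo_add_indicator_Ioo (by nlinarith) (by linarith) hne,
      Nat.cast_succ, add_one_mul, add_assoc]

theorem exists_brickCount_eq_indicator_openBox {ι : Type*} [Fintype ι] {c l u : ι → ℝ}
    (hc : ∀ j, 0 < c j) (h : ∀ j, IsSideMultiple c l u j) :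
    ∃ Λ, ∀ᵐ y, brickCount c Λ y = (openBox l u).indicator 1 y := by
  classical
  choose m hm using h
  obtain rfl : u = l + fun j => m j * c j := funext fun j => by simp [← hm j]
  have hinj : Injective fun k : ι → ℕ => l + fun j => k j * c j := fun k k' h => funext
    fun j => by exact_mod_cast mul_right_cancel₀ (hc j).ne' (add_left_cancel (congrFun h j))
  have hgrid : ∀ᵐ y : ι → ℝ, ∀ j, ∑ i ∈ Finset.range (m j),
      (Ioo (l j + i * c j) (l j + i * c j + c j)).indicator 1 (y j)
        = (Ioo (l j) (l j + m j * c j)).indicator 1 (y j) :=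
    ae_all_iff.2 fun j => (Measure.tendsto_eval_ae_ae (α := fun _ : ι => ℝ) (μ := fun _ => volume)
      (i := j)).eventually (sum_indicator_Ioo_grid_ae (hc j).le (l j) (m j))
  refine ⟨(Fintype.piFinset fun j => Finset.range (m j)).image
    fun k => l + fun j => k j * c j, ?_⟩
  filter_upwards [hgrid] with y hy
  rw [brickCount, Finset.sum_image fun k _ k' _ h => hinj h]
  simp only [indicator_openBox_apply, Pi.add_apply]
  rw [← Finset.prod_congr rfl fun j _ => hy j, Finset.prod_univ_sum]

lemma setIntegral_Ioo_cexp_mul_eq_zero_iff {k : ℂ} (hk : k ≠ 0) {l u : ℝ} (hlu : l ≤ u) :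
    ∫ t in Ioo l u, cexp (k * t) = 0 ↔ cexp (k * u) = cexp (k * l) := by
  rw [← integral_Ioc_eq_integral_Ioo, ← intervalIntegral.integral_of_le hlu,
    integral_exp_mul_complex hk, div_eq_zero_iff, or_iff_left hk, sub_eq_zero]

lemma setIntegral_Ioo_cexp_two_pi_I_div_eq_zero_iff {c l u : ℝ} (hc : 0 < c) (hlu : l ≤ u) :
    ∫ t in Ioo l u, cexp (2 * π * I / c * t) = 0 ↔ ∃ m : ℕ, u - l = m * c := by
  have hc' : (c : ℂ) ≠ 0 := by exact_mod_cast hc.ne'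
  have h2πI : 2 * π * I ≠ 0 := by simp [pi_ne_zero]
  rw [setIntegral_Ioo_cexp_mul_eq_zero_iff (div_ne_zero h2πI hc') hlu, exp_eq_exp_iff_exists_int]
  constructor
  · rintro ⟨n, hn⟩
    field_simp at hn
    have hn : u - l = n * c := by exact_mod_cast (by linear_combination hn : (u - l : ℂ) = n * c)
    lift n to ℕ using by
      by_contra! h
      have : (n : ℝ) < 0 := by exact_mod_cast h
      nlinarith
    exact ⟨n, by exact_mod_cast hn⟩
  · rintro ⟨m, hm⟩
    refine ⟨m, ?_⟩
    have : (u : ℂ) = l + m * c := by exact_mod_cast (by linarith : u = l + m * c)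
    rw [this]
    field_simp
    push_cast
    ring

lemma ofReal_indicator_one_mul {α : Type*} (S : Set α) (W : α → ℂ) (y : α) :
    ((S.indicator (1 : α → ℝ) y : ℝ) : ℂ) * W y = S.indicator W y := by
  by_cases hy : y ∈ S <;> simp [hy]

section Weighted

variable {ι : Type*} [Fintype ι]

lemma indicator_openBox_prod_apply (l u y : ι → ℝ) (w : ι → ℝ → ℂ) :
    (openBox l u).indicator (fun y => ∏ j, w j (y j)) y
      = ∏ j, (Ioo (l j) (u j)).indicator (w j) (y j) := by
  rw [← ofReal_indicator_one_mul, indicator_openBox_apply, ofReal_prod, ← Finset.prod_mul_distrib]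
  simp only [ofReal_indicator_one_mul (Ioo _ _) (w _)]

lemma integral_indicator_openBox_prod (l u : ι → ℝ) (w : ι → ℝ → ℂ) :
    ∫ y, (openBox l u).indicator (fun y => ∏ j, w j (y j)) y
      = ∏ j, ∫ t in Ioo (l j) (u j), w j t := by
  simp_rw [indicator_openBox_prod_apply, ← integral_indicator measurableSet_Ioo]
  exact integral_fintype_prod_volume_eq_prod _

lemma integrable_indicator_openBox {W : (ι → ℝ) → ℂ} (hW : Continuous W) (l u : ι → ℝ) :
    Integrable ((openBox l u).indicator W) := by
  rw [integrable_indicator_iff (measurableSet_openBox l u)]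
  exact (hW.continuousOn.integrableOn_compact
    (isCompact_univ_pi fun j => isCompact_Icc (a := l j) (b := u j))).mono_set
    (pi_mono fun _ _ => Ioo_subset_Icc_self)

lemma sum_integral_indicator_openBox_eq_of_tiling {a b lo hi : ι → ℝ}
    {Λa Λb : Finset (ι → ℝ)}
    (htile : ∀ᵐ y, brickCount a Λa y + brickCount b Λb y = (openBox lo hi).indicator 1 y)
    {W : (ι → ℝ) → ℂ} (hW : Continuous W) :
    (∑ l ∈ Λa, ∫ y, (openBox l (l + a)).indicator W y)
      + ∑ l ∈ Λb, ∫ y, (openBox l (l + b)).indicator W y = ∫ y, (openBox lo hi).indicator W y := by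
  have hweighted : ∀ᵐ y, ∑ l ∈ Λa, (openBox l (l + a)).indicator W y
      + ∑ l ∈ Λb, (openBox l (l + b)).indicator W y = (openBox lo hi).indicator W y := by
    filter_upwards [htile] with y hy
    simpa only [brickCount, ofReal_add, ofReal_sum, add_mul, Finset.sum_mul,
      ofReal_indicator_one_mul] using congrArg (fun r : ℝ => (r : ℂ) * W y) hy
  rw [← integral_finsetSum _ fun _ _ => integrable_indicator_openBox hW _ _,
    ← integral_finsetSum _ fun _ _ => integrable_indicator_openBox hW _ _,
    ← integral_add (integrable_finsetSum _ fun _ _ => integrable_indicator_openBox hW _ _)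
      (integrable_finsetSum _ fun _ _ => integrable_indicator_openBox hW _ _)]
  exact integral_congr_ae hweighted

theorem isSideMultiple_or_of_tiling [DecidableEq ι] {a b lo hi : ι → ℝ}
    {Λa Λb : Finset (ι → ℝ)} (ha : ∀ j, 0 < a j) (hb : ∀ j, 0 < b j) (hlo : ∀ j, lo j < hi j)
    (htile : ∀ᵐ y, brickCount a Λa y + brickCount b Λb y = (openBox lo hi).indicator 1 y)
    {j k : ι} (hjk : j ≠ k) : IsSideMultiple a lo hi j ∨ IsSideMultiple b lo hi k := by
  set w : ι → ℝ → ℂ := update (update (fun _ _ => 1) k fun t : ℝ => cexp (2 * π * I / b k * t)) j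
    fun t : ℝ => cexp (2 * π * I / a j * t) with hw
  have hwj : w j = fun t : ℝ => cexp (2 * π * I / a j * t) := update_self ..
  have hwk : w k = fun t : ℝ => cexp (2 * π * I / b k * t) := by
    rw [hw, update_of_ne hjk.symm, update_self]
  have hW : Continuous fun y : ι → ℝ => ∏ i, w i (y i) := by
    refine continuous_finsetProd _ fun i _ => (?_ : Continuous (w i)).comp (continuous_apply i)
    simp only [hw, update_apply]
    split_ifs <;> fun_prop
  have hint := sum_integral_indicator_openBox_eq_of_tiling htile hW
  have hA : ∀ l : ι → ℝ, ∏ i, ∫ t in Ioo (l i) ((l + a) i), w i t = 0 := fun l =>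
    Finset.prod_eq_zero (Finset.mem_univ j) <| by
      rw [hwj, setIntegral_Ioo_cexp_two_pi_I_div_eq_zero_iff (ha j) (by simp [(ha j).le])]
      exact ⟨1, by simp⟩
  have hB : ∀ l : ι → ℝ, ∏ i, ∫ t in Ioo (l i) ((l + b) i), w i t = 0 := fun l =>
    Finset.prod_eq_zero (Finset.mem_univ k) <| by
      rw [hwk, setIntegral_Ioo_cexp_two_pi_I_div_eq_zero_iff (hb k) (by simp [(hb k).le])]
      exact ⟨1, by simp⟩
  simp only [integral_indicator_openBox_prod, hA, hB, Finset.sum_const_zero, add_zero,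
    eq_comm (a := (0 : ℂ)), Finset.prod_eq_zero_iff, Finset.mem_univ, true_and] at hint
  obtain ⟨i, hzero⟩ := hint
  by_cases hij : i = j
  · subst hij
    rw [hwj, setIntegral_Ioo_cexp_two_pi_I_div_eq_zero_iff (ha i) (hlo i).le] at hzero
    exact .inl hzero
  by_cases hik : i = k
  · subst hik
    rw [hwk, setIntegral_Ioo_cexp_two_pi_I_div_eq_zero_iff (hb i) (hlo i).le] at hzero
    exact .inr hzero
  · have hwi : w i = fun _ => 1 := by rw [hw, update_of_ne hij, update_of_ne hik]
    simp [hwi, (hlo i).le, sub_eq_zero] at hzero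
    exact absurd hzero (hlo i).ne'

end Weighted

lemma ae_ae_insertNth {α : Type*} [MeasureSpace α] [SigmaFinite (volume : Measure α)] {n : ℕ}
    {P : (Fin (n + 1) → α) → Prop} (h : ∀ᵐ y, P y) (j : Fin (n + 1)) :
    ∀ᵐ z : Fin n → α, ∀ᵐ t : α, P (j.insertNth t z) := by
  have h₁ : ∀ᵐ p : α × (Fin n → α), P (j.insertNth p.1 p.2) :=
    (volume_preserving_piFinSuccAbove (fun _ => α) j).symm.quasiMeasurePreserving.ae h
  have h₂ : ∀ᵐ q : (Fin n → α) × α, P (j.insertNth q.2 q.1) :=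
    (Measure.measurePreserving_swap (μ := volume) (ν := volume)).quasiMeasurePreserving.ae h₁
  exact Measure.ae_ae_of_ae_prod h₂

section Line

variable {n : ℕ} (l u : Fin (n + 1) → ℝ) (j : Fin (n + 1)) (z : Fin n → ℝ)

lemma indicator_openBox_insertNth (t : ℝ) :
    (openBox l u).indicator (1 : (Fin (n + 1) → ℝ) → ℝ) (j.insertNth t z)
      = (openBox (l ∘ j.succAbove) (u ∘ j.succAbove)).indicator 1 z
        * (Ioo (l j) (u j)).indicator 1 t := by
  simp [indicator_openBox_apply, Fin.prod_univ_succAbove _ j, mul_comm]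

lemma integrable_indicator_openBox_insertNth :
    Integrable fun t => (openBox l u).indicator (1 : (Fin (n + 1) → ℝ) → ℝ) (j.insertNth t z) := by
  simp_rw [indicator_openBox_insertNth]
  exact ((integrable_indicator_iff measurableSet_Ioo).2 (integrableOn_const (by simp))).const_mul _

lemma integral_indicator_openBox_insertNth (h : l j ≤ u j) :
    ∫ t, (openBox l u).indicator (1 : (Fin (n + 1) → ℝ) → ℝ) (j.insertNth t z)
      = (openBox (l ∘ j.succAbove) (u ∘ j.succAbove)).indicator 1 z * (u j - l j) := by
  simp_rw [indicator_openBox_insertNth]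
  rw [integral_const_mul, integral_indicator_one measurableSet_Ioo, measureReal_def,
    Real.volume_Ioo, ENNReal.toReal_ofReal (sub_nonneg.2 h)]

lemma integrable_brickCount_insertNth (c : Fin (n + 1) → ℝ) (Λ : Finset (Fin (n + 1) → ℝ)) :
    Integrable fun t => brickCount c Λ (j.insertNth t z) :=
  integrable_finsetSum _ fun _ _ => integrable_indicator_openBox_insertNth ..

lemma integral_brickCount_insertNth {c : Fin (n + 1) → ℝ} (hc : 0 ≤ c j)
    (Λ : Finset (Fin (n + 1) → ℝ)) :
    ∫ t, brickCount c Λ (j.insertNth t z)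
      = (∑ l ∈ Λ, (openBox (l ∘ j.succAbove) ((l + c) ∘ j.succAbove)).indicator 1 z) * c j := by
  simp only [brickCount]
  rw [integral_finsetSum _ fun _ _ => integrable_indicator_openBox_insertNth .., Finset.sum_mul]
  refine Finset.sum_congr rfl fun l _ => ?_
  rw [integral_indicator_openBox_insertNth _ _ _ _ (by simpa using hc)]
  simp

end Line

lemma exists_sum_indicator_one_eq_natCast {κ α : Type*} (s : Finset κ) (S : κ → Set α) (z : α) :
    ∃ m : ℕ, ∑ l ∈ s, (S l).indicator (1 : α → ℝ) z = m := by
  classical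
  exact ⟨(s.filter (z ∈ S ·)).card, by simp [indicator_apply, Finset.sum_boole]⟩

theorem exists_side_eq_of_tiling {n : ℕ} {a b lo hi : Fin (n + 1) → ℝ}
    {Λa Λb : Finset (Fin (n + 1) → ℝ)} (hlo : ∀ i, lo i < hi i)
    (htile : ∀ᵐ y, brickCount a Λa y + brickCount b Λb y = (openBox lo hi).indicator 1 y)
    {j : Fin (n + 1)} (haj : 0 ≤ a j) (hbj : 0 ≤ b j) :
    ∃ m k : ℕ, hi j - lo j = m * a j + k * b j := by
  set C := openBox (lo ∘ j.succAbove) (hi ∘ j.succAbove)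
  have hC : volume C ≠ 0 := by
    simp [C, openBox, volume_pi, Measure.pi_pi, Real.volume_Ioo, Finset.prod_ne_zero_iff, hlo]
  have := ae_restrict_neBot.2 hC
  obtain ⟨z, hz, hzC⟩ := ((ae_restrict_of_ae (ae_ae_insertNth htile j)).and
    (ae_restrict_mem (s := C) (measurableSet_openBox _ _))).exists
  have hline := integral_congr_ae hz
  rw [integral_add (integrable_brickCount_insertNth ..) (integrable_brickCount_insertNth ..),
    integral_brickCount_insertNth _ _ haj, integral_brickCount_insertNth _ _ hbj,
    integral_indicator_openBox_insertNth _ _ _ _ (hlo j).le, indicator_of_mem hzC] at hline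
  obtain ⟨m, hm⟩ := exists_sum_indicator_one_eq_natCast Λa
    (fun l => openBox (l ∘ j.succAbove) ((l + a) ∘ j.succAbove)) z
  obtain ⟨k, hk⟩ := exists_sum_indicator_one_eq_natCast Λb
    (fun l => openBox (l ∘ j.succAbove) ((l + b) ∘ j.succAbove)) z
  rw [hm, hk, Pi.one_apply, one_mul] at hline
  exact ⟨m, k, hline.symm⟩

theorem exists_cut_of_tiling {n : ℕ} {a b lo hi : Fin (n + 1) → ℝ}
    {Λa Λb : Finset (Fin (n + 1) → ℝ)} (ha : ∀ j, 0 < a j) (hb : ∀ j, 0 < b j)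
    (hlo : ∀ j, lo j < hi j)
    (htile : ∀ᵐ y, brickCount a Λa y + brickCount b Λb y = (openBox lo hi).indicator 1 y) :
    ∃ j α, lo j ≤ α ∧ α ≤ hi j ∧
      (∃ Λ, ∀ᵐ y, brickCount a Λ y = {y ∈ openBox lo hi | y j < α}.indicator 1 y) ∧
      (∃ Λ, ∀ᵐ y, brickCount b Λ y = {y ∈ openBox lo hi | α < y j}.indicator 1 y) := by
  obtain ⟨j, α, hloα, hαhi, hA, hB⟩ := exists_cut_of_isSideMultiple (fun j => (ha j).le)
    (fun j => (hb j).le) (fun j => (hlo j).le)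
    (fun _ _ hjk => isSideMultiple_or_of_tiling ha hb hlo htile hjk)
    (fun _ => exists_side_eq_of_tiling hlo htile (ha _).le (hb _).le)
  refine ⟨j, α, hloα, hαhi, ?_, ?_⟩
  · rw [sep_lt_openBox hαhi]
    rcases hA with rfl | hA
    · rw [openBox_eq_empty (l := lo) (j := j) (by simp)]
      exact ⟨∅, by simp [brickCount]⟩
    · exact exists_brickCount_eq_indicator_openBox ha hA
  · rw [sep_gt_openBox hloα]
    rcases hB with rfl | hB
    · rw [openBox_eq_empty (u := hi) (j := j) (by simp)]
      exact ⟨∅, by simp [brickCount]⟩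
    · exact exists_brickCount_eq_indicator_openBox hb hB

section Euclidean

variable {d : ℕ}

lemma indicator_preimage_ofLp (S : Set (Fin d → ℝ)) (x : EuclideanSpace ℝ (Fin d)) :
    (WithLp.ofLp ⁻¹' S).indicator (fun _ => (1 : ℝ)) x = S.indicator 1 x.ofLp := by
  by_cases hx : x.ofLp ∈ S <;> simp [hx]

lemma indicator_brick_sub (c : Fin d → ℝ) (x l : EuclideanSpace ℝ (Fin d)) :
    (Brick d c).indicator (fun _ => (1 : ℝ)) (x - l)
      = (openBox l.ofLp (l.ofLp + c)).indicator 1 x.ofLp := by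
  have : x - l ∈ Brick d c ↔ x.ofLp ∈ openBox l.ofLp (l.ofLp + c) := by
    simp [Brick, openBox, sub_pos, sub_lt_iff_lt_add']
  by_cases hx : x.ofLp ∈ openBox l.ofLp (l.ofLp + c) <;> simp [hx, this]

lemma sum_indicator_brick_sub (c : Fin d → ℝ) (Λ : Finset (EuclideanSpace ℝ (Fin d)))
    (x : EuclideanSpace ℝ (Fin d)) :
    ∑ l ∈ Λ, (Brick d c).indicator (fun _ => (1 : ℝ)) (x - l)
      = brickCount c (Λ.image WithLp.ofLp) x.ofLp := by
  rw [brickCount, Finset.sum_image fun _ _ _ _ h => WithLp.ofLp_injective 2 h]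
  exact Finset.sum_congr rfl fun l _ => indicator_brick_sub c x l

lemma tilesBy_preimage_ofLp {c : Fin d → ℝ} {S : Set (Fin d → ℝ)}
    (h : ∃ Λ, ∀ᵐ y, brickCount c Λ y = S.indicator 1 y) :
    TilesBy d (Brick d c) (WithLp.ofLp ⁻¹' S) := by
  obtain ⟨Λ, hΛ⟩ := h
  refine ⟨Λ.image (WithLp.toLp 2), ?_⟩
  filter_upwards [(PiLp.volume_preserving_ofLp _).quasiMeasurePreserving.ae hΛ] with x hx
  rw [sum_indicator_brick_sub, Finset.image_image, indicator_preimage_ofLp]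
  simpa [Function.comp_def] using hx

end Euclidean

/-- (Bower–Michael) If translates of two bricks `A` and `B` tile a box `Q`, then a single
hyperplane cut `x j = α` splits `Q` into a box tileable by `A` alone and a box tileable
by `B` alone. -/
theorem bower_michael (d : ℕ) (hd : 1 ≤ d)
    (a b : Fin d → ℝ) (ha : ∀ j, 0 < a j) (hb : ∀ j, 0 < b j)
    (lo hi : Fin d → ℝ) (hlo : ∀ j, lo j < hi j)
    (Q : Set (EuclideanSpace ℝ (Fin d)))
    (hQ : Q = {x : EuclideanSpace ℝ (Fin d) | ∀ j, x j ∈ Set.Ioo (lo j) (hi j)})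
    (Λa Λb : Finset (EuclideanSpace ℝ (Fin d)))
    (htile : ∀ᵐ x : EuclideanSpace ℝ (Fin d),
      (∑ l ∈ Λa, (Brick d a).indicator (fun _ => (1 : ℝ)) (x - l)) +
      (∑ l ∈ Λb, (Brick d b).indicator (fun _ => (1 : ℝ)) (x - l)) =
      Q.indicator (fun _ => (1 : ℝ)) x) :
    ∃ (j : Fin d) (α : ℝ), lo j ≤ α ∧ α ≤ hi j ∧
      TilesBy d (Brick d a) {x ∈ Q | x j < α} ∧
      TilesBy d (Brick d b) {x ∈ Q | α < x j} := by
  obtain ⟨n, rfl⟩ : ∃ n, d = n + 1 := ⟨d - 1, by omega⟩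
  have hQ' : Q = WithLp.ofLp ⁻¹' openBox lo hi := by
    rw [hQ]
    ext x
    simp [openBox]
  have htile' : ∀ᵐ y, brickCount a (Λa.image WithLp.ofLp) y
      + brickCount b (Λb.image WithLp.ofLp) y = (openBox lo hi).indicator 1 y := by
    filter_upwards [(PiLp.volume_preserving_toLp _).quasiMeasurePreserving.ae htile] with y hy
    simpa [sum_indicator_brick_sub, hQ', indicator_preimage_ofLp] using hy
  obtain ⟨j, α, hloα, hαhi, hA, hB⟩ := exists_cut_of_tiling ha hb hlo htile'
  subst hQ'
  exact ⟨j, α, hloα, hαhi, tilesBy_preimage_ofLp hA, tilesBy_preimage_ofLp hB⟩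
end

section
/- If a rectangle (0,w)×(0,h) is tiled by translates of bricks from the set {1×R, R×1, (R-1)×(R-1)} with R > 2 irrational, then considering any horizontal line segment of the tiling, w is a nonnegative integer combination of 1, R, and R-1. -/
/-!
Cut the tiling along a horizontal line at a height `0 < y < h` for which, by Fubini, the tiling
identity holds almost everywhere on the line. Integrating that identity along the line, every
brick met by the line contributes its width, so `w = p + q R + r (R - 1)` where `p`, `q`, `r`
count the bricks of each shape crossing the line.
-/

open MeasureTheory Set
open scoped Finset

section Slices

variable {α β : Type*} [MeasurableSpace α] [MeasurableSpace β] {μ : Measure α} {ν : Measure β}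
  [SFinite μ] [SFinite ν]

theorem exists_mem_ae_slice_of_ae_prod {P : α × β → Prop} (hP : ∀ᵐ z ∂μ.prod ν, P z)
    {s : Set β} (hs : ν s ≠ 0) : ∃ y ∈ s, ∀ᵐ x ∂μ, P (x, y) := by
  have hswap : ∀ᵐ z ∂ν.prod μ, P z.swap :=
    Measure.measurePreserving_swap.quasiMeasurePreserving.tendsto_ae.eventually hP
  exact Measure.exists_mem_of_measure_ne_zero_of_ae hs
    (ae_restrict_of_ae (Measure.ae_ae_of_ae_prod hswap))

end Slices

section HorizontalSections

variable {s t : Set ℝ} (y : ℝ)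

theorem integrable_indicator_prod_one_sub (l : ℝ × ℝ) (hs : MeasurableSet s)
    (hs' : volume s ≠ ⊤) :
    Integrable fun x : ℝ => (s ×ˢ t).indicator (1 : ℝ × ℝ → ℝ) ((x, y) - l) := by
  obtain ⟨a, b⟩ := l
  simp only [Prod.mk_sub_mk, indicator_prod_one]
  exact (((integrable_indicator_iff hs).2 (integrableOn_const hs')).comp_sub_right a).mul_const _

theorem integral_indicator_prod_one_sub (l : ℝ × ℝ) (hs : MeasurableSet s) :
    ∫ x : ℝ, (s ×ˢ t).indicator (1 : ℝ × ℝ → ℝ) ((x, y) - l) =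
      volume.real s * t.indicator 1 (y - l.2) := by
  obtain ⟨a, b⟩ := l
  simp only [Prod.mk_sub_mk, indicator_prod_one]
  rw [integral_mul_const, integral_sub_right_eq_self (fun x => s.indicator (1 : ℝ → ℝ) x),
    integral_indicator_one hs]

theorem integrable_sum_indicator_prod_one_sub (Λ : Finset (ℝ × ℝ)) (hs : MeasurableSet s)
    (hs' : volume s ≠ ⊤) :
    Integrable fun x : ℝ => ∑ l ∈ Λ, (s ×ˢ t).indicator (1 : ℝ × ℝ → ℝ) ((x, y) - l) :=
  integrable_finsetSum _ fun l _ => integrable_indicator_prod_one_sub y l hs hs'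

theorem integral_sum_indicator_prod_one_sub (Λ : Finset (ℝ × ℝ)) [DecidablePred (· ∈ t)]
    (hs : MeasurableSet s) (hs' : volume s ≠ ⊤) :
    ∫ x : ℝ, ∑ l ∈ Λ, (s ×ˢ t).indicator (1 : ℝ × ℝ → ℝ) ((x, y) - l) =
      volume.real s * #{l ∈ Λ | y - l.2 ∈ t} := by
  rw [integral_finsetSum _ fun l _ => integrable_indicator_prod_one_sub y l hs hs']
  simp only [integral_indicator_prod_one_sub y _ hs, ← Finset.mul_sum]
  simp [indicator_apply]

end HorizontalSections

theorem width_is_integer_combination_general (R : ℝ) (hR : 2 < R)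
    (w h : ℝ) (hw : 0 < w) (hh : 0 < h)
    (Λ1 Λ2 Λ3 : Finset (ℝ × ℝ))
    (htile : ∀ᵐ x : ℝ × ℝ,
      (∑ l ∈ Λ1, (Set.Ioo (0 : ℝ) 1 ×ˢ Set.Ioo (0 : ℝ) R).indicator
          (fun _ => (1 : ℝ)) (x - l)) +
      (∑ l ∈ Λ2, (Set.Ioo (0 : ℝ) R ×ˢ Set.Ioo (0 : ℝ) 1).indicator
          (fun _ => (1 : ℝ)) (x - l)) +
      (∑ l ∈ Λ3, (Set.Ioo (0 : ℝ) (R - 1) ×ˢ Set.Ioo (0 : ℝ) (R - 1)).indicator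
          (fun _ => (1 : ℝ)) (x - l)) =
      (Set.Ioo (0 : ℝ) w ×ˢ Set.Ioo (0 : ℝ) h).indicator (fun _ => (1 : ℝ)) x) :
    ∃ p q r : ℕ, w = (p : ℝ) * 1 + (q : ℝ) * R + (r : ℝ) * (R - 1) := by
  rw [Measure.volume_eq_prod] at htile
  obtain ⟨y, hy, hline⟩ := exists_mem_ae_slice_of_ae_prod htile (s := Ioo 0 h) (by simp [hh])
  have hwidth := integral_congr_ae hline
  simp only [← Pi.one_def] at hwidth
  have hint (Λ : Finset (ℝ × ℝ)) (a b : ℝ) :=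
    integrable_sum_indicator_prod_one_sub y Λ (t := Ioo 0 b) measurableSet_Ioo
      (measure_Ioo_lt_top (a := 0) (b := a)).ne
  have hrect : ∫ x : ℝ, (Ioo 0 w ×ˢ Ioo 0 h).indicator (1 : ℝ × ℝ → ℝ) (x, y) = w := by
    simp [indicator_prod_one, hy, integral_indicator_one, hw.le]
  rw [integral_add (by exact (hint _ _ _).add (hint _ _ _)) (hint _ _ _),
    integral_add (hint _ _ _) (hint _ _ _), hrect] at hwidth
  simp only [integral_sum_indicator_prod_one_sub y _ measurableSet_Ioo measure_Ioo_lt_top.ne]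
    at hwidth
  rw [Real.volume_real_Ioo_of_le zero_le_one, Real.volume_real_Ioo_of_le (by linarith),
    Real.volume_real_Ioo_of_le (by linarith)] at hwidth
  refine ⟨#{l ∈ Λ1 | y - l.2 ∈ Ioo 0 R}, #{l ∈ Λ2 | y - l.2 ∈ Ioo 0 1},
    #{l ∈ Λ3 | y - l.2 ∈ Ioo 0 (R - 1)}, ?_⟩
  linarith

/-- If a rectangle `(0,w) × (0,h)` is tiled by translates of the bricks `1 × R`, `R × 1`,
`(R-1) × (R-1)` with `R > 2` irrational, then `w` is a nonnegative integer combination of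
`1`, `R` and `R - 1`. -/
theorem width_is_integer_combination (R : ℝ) (hR : 2 < R) (hirr : Irrational R)
    (w h : ℝ) (hw : 0 < w) (hh : 0 < h)
    (Λ1 Λ2 Λ3 : Finset (ℝ × ℝ))
    (htile : ∀ᵐ x : ℝ × ℝ,
      (∑ l ∈ Λ1, (Set.Ioo (0 : ℝ) 1 ×ˢ Set.Ioo (0 : ℝ) R).indicator
          (fun _ => (1 : ℝ)) (x - l)) +
      (∑ l ∈ Λ2, (Set.Ioo (0 : ℝ) R ×ˢ Set.Ioo (0 : ℝ) 1).indicator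
          (fun _ => (1 : ℝ)) (x - l)) +
      (∑ l ∈ Λ3, (Set.Ioo (0 : ℝ) (R - 1) ×ˢ Set.Ioo (0 : ℝ) (R - 1)).indicator
          (fun _ => (1 : ℝ)) (x - l)) =
      (Set.Ioo (0 : ℝ) w ×ˢ Set.Ioo (0 : ℝ) h).indicator (fun _ => (1 : ℝ)) x) :
    ∃ p q r : ℕ, w = (p : ℝ) * 1 + (q : ℝ) * R + (r : ℝ) * (R - 1) :=
  width_is_integer_combination_general R hR w h hw hh Λ1 Λ2 Λ3 htile
end

section
/- Suppose a 1-dimensional tiling: finite multisets of translates of the intervals (0,a) and (0,b) (a, b > 0) partition (0,1) up to measure zero, i.e. ∑_{λ∈Λ_a} χ_{(λ,λ+a)} + ∑_{μ∈Λ_b} χ_{(μ,μ+b)} = χ_{(0,1)} a.e. Then 1 = |Λ_a|·a + |Λ_b|·b, and moreover the tiling can be rearranged so that all a-intervals come first: (0, |Λ_a|·a) is tiled by a-intervals and (|Λ_a|·a, 1) by b-intervals. -/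
open MeasureTheory Set Finset

/-!
Integrating the tiling identity gives `1 = #Λa * a + #Λb * b`. Conversely, `n` consecutive
translates `t, t + c, …, t + (n - 1) c` of `(0, c)` tile `(t, t + n c)` up to the finitely many
endpoints, so `#Λa` copies of `(0, a)` starting at `0` followed by `#Λb` copies of `(0, b)`
starting at `#Λa * a` tile `(0, 1)` in sorted order.
-/

lemma integrable_indicator_one_Ioo (l u : ℝ) :
    Integrable ((Ioo l u).indicator (fun _ => (1 : ℝ))) :=
  (integrable_indicator_iff measurableSet_Ioo).2 <|
    integrableOn_const (by simp [Real.volume_Ioo]) (by simp)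

lemma integral_indicator_one_Ioo {l u : ℝ} (h : l ≤ u) :
    ∫ x, (Ioo l u).indicator (fun _ => (1 : ℝ)) x = u - l :=
  (integral_indicator_one measurableSet_Ioo).trans (Real.volume_real_Ioo_of_le h)

lemma integrable_sum_indicator_one_Ioo (Λ : Finset ℝ) (c : ℝ) :
    Integrable (fun x => ∑ l ∈ Λ, (Ioo l (l + c)).indicator (fun _ => (1 : ℝ)) x) :=
  integrable_finsetSum Λ fun l _ => integrable_indicator_one_Ioo l (l + c)

lemma integral_sum_indicator_one_Ioo (Λ : Finset ℝ) {c : ℝ} (hc : 0 ≤ c) :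
    ∫ x, ∑ l ∈ Λ, (Ioo l (l + c)).indicator (fun _ => (1 : ℝ)) x = #Λ * c := by
  rw [integral_finsetSum Λ fun l _ => integrable_indicator_one_Ioo l (l + c)]
  simp [integral_indicator_one_Ioo (le_add_of_nonneg_right hc)]

lemma ae_indicator_one_Ioo_add_indicator_one_Ioo {t m u : ℝ} (htm : t ≤ m) (hmu : m ≤ u) :
    ∀ᵐ x : ℝ, (Ioo t m).indicator (fun _ => (1 : ℝ)) x + (Ioo m u).indicator (fun _ => 1) x =
      (Ioo t u).indicator (fun _ => 1) x := by
  filter_upwards [Measure.ae_ne volume m] with x hxm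
  simp only [indicator_apply]
  split_ifs <;> grind

lemma ae_sum_range_indicator_one_Ioo {c : ℝ} (hc : 0 ≤ c) (t : ℝ) (n : ℕ) :
    ∀ᵐ x : ℝ, ∑ k ∈ range n, (Ioo (t + k * c) (t + k * c + c)).indicator (fun _ => (1 : ℝ)) x =
      (Ioo t (t + n * c)).indicator (fun _ => 1) x := by
  induction n with
  | zero => simp
  | succ n ih =>
    have hsplit : t + (n + 1 : ℕ) * c = t + n * c + c := by push_cast; ring
    filter_upwards [ih, ae_indicator_one_Ioo_add_indicator_one_Ioo
      (le_add_of_nonneg_right (by positivity : 0 ≤ (n : ℝ) * c)) (le_add_of_nonneg_right hc)]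
      with x hprefix hlast
    rw [sum_range_succ, hprefix, hsplit, hlast]

lemma ae_sum_indicator_one_Ioo_image_range {c : ℝ} (hc : 0 < c) (t : ℝ) (n : ℕ) :
    ∀ᵐ x : ℝ, ∑ l ∈ (range n).image (fun k : ℕ => t + k * c),
        (Ioo l (l + c)).indicator (fun _ => (1 : ℝ)) x =
      (Ioo t (t + n * c)).indicator (fun _ => 1) x := by
  have hinj : StrictMono (fun k : ℕ => t + k * c) := fun i j hij => by
    simp only [add_lt_add_iff_left]; gcongr
  filter_upwards [ae_sum_range_indicator_one_Ioo hc.le t n] with x hx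
  rwa [sum_image hinj.injective.injOn]

lemma length_eq_of_tiling {a b : ℝ} (ha : 0 ≤ a) (hb : 0 ≤ b) {Λa Λb : Finset ℝ}
    (htile : ∀ᵐ x : ℝ,
      (∑ l ∈ Λa, (Ioo l (l + a)).indicator (fun _ => (1 : ℝ)) x) +
      (∑ l ∈ Λb, (Ioo l (l + b)).indicator (fun _ => (1 : ℝ)) x) =
      (Ioo (0 : ℝ) 1).indicator (fun _ => (1 : ℝ)) x) :
    1 = #Λa * a + #Λb * b := by
  have h := integral_congr_ae htile
  rwa [integral_add (integrable_sum_indicator_one_Ioo Λa a) (integrable_sum_indicator_one_Ioo Λb b),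
    integral_sum_indicator_one_Ioo Λa ha, integral_sum_indicator_one_Ioo Λb hb,
    integral_indicator_one_Ioo zero_le_one, sub_zero, eq_comm] at h

/-- 1-dimensional case: if translates of the intervals `(0,a)` and `(0,b)` tile `(0,1)`,
then `1 = |Λa| * a + |Λb| * b`, and the tiling can be rearranged so that all the
`a`-intervals come first: `(0, |Λa| * a)` is tiled by `a`-intervals and `(|Λa| * a, 1)`
by `b`-intervals. -/
theorem one_dimensional_sorted_tiling (a b : ℝ) (ha : 0 < a) (hb : 0 < b)
    (Λa Λb : Finset ℝ)
    (htile : ∀ᵐ x : ℝ,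
      (∑ l ∈ Λa, (Set.Ioo l (l + a)).indicator (fun _ => (1 : ℝ)) x) +
      (∑ l ∈ Λb, (Set.Ioo l (l + b)).indicator (fun _ => (1 : ℝ)) x) =
      (Set.Ioo (0 : ℝ) 1).indicator (fun _ => (1 : ℝ)) x) :
    1 = (Λa.card : ℝ) * a + (Λb.card : ℝ) * b ∧
    ∃ Λa' Λb' : Finset ℝ,
      (∀ᵐ x : ℝ,
        (∑ l ∈ Λa', (Set.Ioo l (l + a)).indicator (fun _ => (1 : ℝ)) x) =
        (Set.Ioo (0 : ℝ) ((Λa.card : ℝ) * a)).indicator (fun _ => (1 : ℝ)) x) ∧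
      (∀ᵐ x : ℝ,
        (∑ l ∈ Λb', (Set.Ioo l (l + b)).indicator (fun _ => (1 : ℝ)) x) =
        (Set.Ioo ((Λa.card : ℝ) * a) 1).indicator (fun _ => (1 : ℝ)) x) := by
  have hlen := length_eq_of_tiling ha.le hb.le htile
  have hA := ae_sum_indicator_one_Ioo_image_range ha 0 #Λa
  have hB := ae_sum_indicator_one_Ioo_image_range hb (#Λa * a) #Λb
  rw [zero_add] at hA
  rw [← hlen] at hB
  exact ⟨hlen, _, _, hA, hB⟩
end
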